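/- arXiv:1501.03924 — 2 statements merged into one kernel-verified Lean document; each statement's English description precedes it below -/
import Mathlib

section
/- Let p be a prime, s a positive integer, q = p^s, R = Z_q[u]/(u^2), and n a positive integer with gcd(n, p) = 1. Then there exist a positive integer t and monic polynomials f_1, …, f_t ∈ R[X] that are pairwise coprime (in the Bézout sense: for l ≠ l' there exist a, b ∈ R[X] with a·f_l + b·f_{l'} = 1), each of whose reductions modulo (p,u) is irreducible in F_p[X], such that X^n − 1 = f_1 f_2 ⋯ f_t in R[X]. -/
open Polynomial

/-- The reduction map `R = Z_q[u]/(u^2) → F_p` sending `a + b·u` to `a mod p`. -/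
noncomputable def dualRed (p s : ℕ) (hs : 0 < s) :
    DualNumber (ZMod (p ^ s)) →+* ZMod p :=
  (ZMod.castHom (dvd_pow_self p hs.ne') (ZMod p)).comp
    (TrivSqZeroExt.fstHom (ZMod (p ^ s)) (ZMod (p ^ s)) (ZMod (p ^ s))).toRingHom

/-!
Since `gcd(n, p) = 1`, `X ^ n - 1` is separable over `𝔽_p`, so it is the product of distinct
monic irreducible, hence pairwise coprime, factors. The reduction `R → 𝔽_p` is surjective with
nilpotent kernel `(p, u)`, so Hensel's lemma lifts this factorization, one coprime factor at a
time, to a factorization of `X ^ n - 1` into monic polynomials over `R`. Coprimality lifts too: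
a Bézout relation modulo a nilpotent ideal becomes exact after multiplying by the inverse of
`1 + nilpotent`.
-/

theorem Ideal.le_nilradical_of_isNilpotent {R : Type*} [CommSemiring R] {I : Ideal R}
    (hI : IsNilpotent I) : I ≤ nilradical R :=
  fun _ hx => let ⟨k, hk⟩ := hI; ⟨k, hk ▸ Ideal.pow_mem_pow hx k⟩

namespace Polynomial

variable {A B : Type*} [CommRing A] [CommRing B]

theorem modByMonic_mem_map_C {I : Ideal A} {f g : A[X]} (hg : g.Monic) (hf : f ∈ I.map C) :
    f %ₘ g ∈ I.map C := by
  rw [← Ideal.mk_ker (I := I), ← ker_mapRingHom, RingHom.mem_ker, coe_mapRingHom] at hf ⊢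
  rw [map_modByMonic _ hg, hf, zero_modByMonic]

theorem divByMonic_mem_map_C {I : Ideal A} {f g : A[X]} (hg : g.Monic) (hf : f ∈ I.map C) :
    f /ₘ g ∈ I.map C := by
  rw [← Ideal.mk_ker (I := I), ← ker_mapRingHom, RingHom.mem_ker, coe_mapRingHom] at hf ⊢
  rw [map_divByMonic _ hg, hf, zero_divByMonic]

theorem degree_lt_of_mul_add_mul_eq [Nontrivial A] {G H ρ δ E : A[X]} (hG : G.Monic)
    (hH : H.Monic) (hρ : ρ.degree < H.degree) (hE : E.degree < (G * H).degree)
    (h : G * ρ + H * δ = E) : δ.degree < G.degree := by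
  have hGρ : (G * ρ).degree < (G * H).degree := by
    rw [mul_comm G ρ, mul_comm G H, hG.degree_mul, hG.degree_mul]
    exact WithBot.add_lt_add_right (degree_ne_bot.2 hG.ne_zero) hρ
  have hHδ : (δ * H).degree < (G * H).degree := by
    rw [show δ * H = E - G * ρ by linear_combination h]
    exact (degree_sub_le _ _).trans_lt (max_lt hE hGρ)
  rwa [hH.degree_mul, hH.degree_mul,
    WithBot.add_lt_add_iff_right (degree_ne_bot.2 hH.ne_zero)] at hHδ

theorem exists_monic_factors_mod_sq [Nontrivial A] (I : Ideal A) {F G H : A[X]}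
    (hF : F.Monic) (hG : G.Monic) (hH : H.Monic)
    (hdeg : (G * H).degree = F.degree) (hco : IsCoprime G H)
    (hE : F - G * H ∈ I.map C) :
    ∃ G' H' : A[X], G'.Monic ∧ H'.Monic ∧ G' - G ∈ I.map C ∧ H' - H ∈ I.map C ∧
      F - G' * H' ∈ (I ^ 2).map C := by
  obtain ⟨u, v, hbez⟩ := hco
  set E := F - G * H
  set ρ := (u * E) %ₘ H
  set q := (u * E) /ₘ H
  set δ := v * E + q * G
  have hdiv : ρ + H * q = u * E := modByMonic_add_div (u * E) H
  -- reducing `u * E` mod `H` gives `deg ρ < deg H`, hence `deg δ < deg G`: the lifts stay monic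
  have key : G * ρ + H * δ = E := by linear_combination G * hdiv + E * hbez
  have hEu : u * E ∈ I.map C := Ideal.mul_mem_left _ _ hE
  have hρ : ρ ∈ I.map C := modByMonic_mem_map_C hH hEu
  have hδ : δ ∈ I.map C :=
    add_mem (Ideal.mul_mem_left _ _ hE) (Ideal.mul_mem_right _ _ (divByMonic_mem_map_C hH hEu))
  have hρdeg : ρ.degree < H.degree := degree_modByMonic_lt _ hH
  have hEdeg : E.degree < (G * H).degree := by
    rw [hdeg]
    exact degree_sub_lt_left hdeg.symm hF.ne_zero
      (by rw [hF.leadingCoeff, (hG.mul hH).leadingCoeff])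
  have hδdeg : δ.degree < G.degree := degree_lt_of_mul_add_mul_eq hG hH hρdeg hEdeg key
  refine ⟨G + δ, H + ρ, hG.add_of_left hδdeg, hH.add_of_left hρdeg,
    by rwa [add_sub_cancel_left], by rwa [add_sub_cancel_left], ?_⟩
  rw [show F - (G + δ) * (H + ρ) = -(δ * ρ) by linear_combination -key, Ideal.map_pow, sq]
  exact neg_mem (Ideal.mul_mem_mul hδ hρ)

theorem isCoprime_of_isCoprime_map {φ : A →+* B} (hsurj : Function.Surjective φ)
    (hker : RingHom.ker φ ≤ nilradical A) {G H : A[X]}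
    (hco : IsCoprime (G.map φ) (H.map φ)) : IsCoprime G H := by
  obtain ⟨a, b, hab⟩ := hco
  obtain ⟨u, rfl⟩ := map_surjective φ hsurj a
  obtain ⟨v, rfl⟩ := map_surjective φ hsurj b
  have hnil : IsNilpotent (u * G + v * H - 1) := by
    refine Polynomial.isNilpotent_iff.2 fun i => hker ?_
    rw [RingHom.mem_ker, ← coeff_map, Polynomial.map_sub, Polynomial.map_add, Polynomial.map_mul,
      Polynomial.map_mul, hab, Polynomial.map_one, sub_self, coeff_zero]
  obtain ⟨w, hw⟩ := hnil.isUnit_one_add.exists_left_inv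
  exact ⟨w * u, w * v, by linear_combination hw⟩

theorem exists_monic_lift_of_isCoprime [Nontrivial B] {φ : A →+* B}
    (hsurj : Function.Surjective φ) (hnil : IsNilpotent (RingHom.ker φ)) {F : A[X]}
    (hF : F.Monic) {g h : B[X]} (hg : g.Monic) (hh : h.Monic) (hco : IsCoprime g h)
    (hfac : F.map φ = g * h) :
    ∃ G H : A[X], G.Monic ∧ H.Monic ∧ G.map φ = g ∧ H.map φ = h ∧ F = G * H := by
  have : Nontrivial A := φ.domain_nontrivial
  have hmem_ker (P : A[X]) : P ∈ (RingHom.ker φ).map C ↔ P.map φ = 0 := by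
    rw [← ker_mapRingHom, RingHom.mem_ker, coe_mapRingHom]
  obtain ⟨k, hk⟩ := hnil
  suffices ∀ j, ∃ G H : A[X], G.Monic ∧ H.Monic ∧ G.map φ = g ∧ H.map φ = h ∧
      F - G * H ∈ (RingHom.ker φ ^ (j + 1)).map C by
    obtain ⟨G, H, hG, hH, hGg, hHh, hE⟩ := this k
    rw [pow_succ, hk, zero_mul, Ideal.zero_eq_bot, Ideal.map_bot, Ideal.mem_bot,
      sub_eq_zero] at hE
    exact ⟨G, H, hG, hH, hGg, hHh, hE⟩
  intro j
  induction j with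
  | zero =>
    obtain ⟨G, hGg, -, hG⟩ := lifts_and_degree_eq_and_monic (mem_lifts_of_surjective hsurj g) hg
    obtain ⟨H, hHh, -, hH⟩ := lifts_and_degree_eq_and_monic (mem_lifts_of_surjective hsurj h) hh
    refine ⟨G, H, hG, hH, hGg, hHh, ?_⟩
    rw [zero_add, pow_one, hmem_ker, Polynomial.map_sub, Polynomial.map_mul, hGg, hHh, hfac,
      sub_self]
  | succ j ih =>
    obtain ⟨G, H, hG, hH, hGg, hHh, hE⟩ := ih
    have hdeg : (G * H).degree = F.degree := by
      rw [← (hG.mul hH).degree_map φ, ← hF.degree_map φ, Polynomial.map_mul, hGg, hHh, hfac]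
    have hco' : IsCoprime G H :=
      isCoprime_of_isCoprime_map hsurj (Ideal.le_nilradical_of_isNilpotent ⟨k, hk⟩)
        (by rwa [hGg, hHh])
    obtain ⟨G', H', hG', hH', hGG', hHH', hE'⟩ :=
      exists_monic_factors_mod_sq _ hF hG hH hdeg hco' hE
    have hmap_eq {P Q : A[X]} (hPQ : P - Q ∈ (RingHom.ker φ ^ (j + 1)).map C) :
        P.map φ = Q.map φ := by
      rw [← sub_eq_zero, ← Polynomial.map_sub, ← hmem_ker]
      exact Ideal.map_mono (Ideal.pow_le_self j.succ_ne_zero) hPQ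
    refine ⟨G', H', hG', hH', (hmap_eq hGG').trans hGg, (hmap_eq hHH').trans hHh,
      Ideal.map_mono (Ideal.pow_le_pow_right ?_) (by rwa [← pow_mul] at hE')⟩
    omega

theorem exists_monic_list_lift [Nontrivial B] {φ : A →+* B}
    (hsurj : Function.Surjective φ) (hnil : IsNilpotent (RingHom.ker φ)) {L : List B[X]}
    (hL : ∀ g ∈ L, g.Monic) (hco : L.Pairwise IsCoprime) {F : A[X]} (hF : F.Monic)
    (hfac : F.map φ = L.prod) :
    ∃ M : List A[X], (∀ G ∈ M, G.Monic) ∧ M.map (map φ) = L ∧ F = M.prod := by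
  induction L generalizing F with
  | nil =>
    refine ⟨[], by simp, rfl, ?_⟩
    rw [List.prod_nil, ← hF.natDegree_eq_zero, ← hF.natDegree_map φ, hfac, List.prod_nil,
      natDegree_one]
  | cons g L ih =>
    rw [List.forall_mem_cons] at hL
    rw [List.pairwise_cons] at hco
    have hprod_monic : L.prod.Monic := List.prod_induction _ (fun _ _ => Monic.mul) monic_one hL.2
    have hprod_co : IsCoprime g L.prod :=
      List.prod_induction _ (fun _ _ => IsCoprime.mul_right) isCoprime_one_right hco.1
    obtain ⟨G, H, hG, hH, hGg, hHh, rfl⟩ := exists_monic_lift_of_isCoprime hsurj hnil hF hL.1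
      hprod_monic hprod_co (by rw [hfac, List.prod_cons])
    obtain ⟨M, hM, hML, rfl⟩ := ih hL.2 hco.2 hH hHh
    exact ⟨G :: M, List.forall_mem_cons.2 ⟨hG, hM⟩, by rw [List.map_cons, hGg, hML],
      List.prod_cons.symm⟩

open UniqueFactorizationMonoid in
theorem exists_list_monic_irreducible_of_squarefree {K : Type*} [Field K] {f : K[X]}
    (hf : f.Monic) (hsf : Squarefree f) :
    ∃ L : List K[X], (∀ g ∈ L, g.Monic ∧ Irreducible g) ∧ L.Pairwise IsCoprime ∧
      L.prod = f := by
  classical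
  have hfactor {g : K[X]} (hg : g ∈ (normalizedFactors f).toList) : g.Monic ∧ Irreducible g :=
    have h := (Polynomial.mem_normalizedFactors_iff hf.ne_zero).1 (Multiset.mem_toList.1 hg)
    ⟨h.2.1, h.1⟩
  have hnodup : (normalizedFactors f).toList.Nodup := by
    rw [← Multiset.coe_nodup, Multiset.coe_toList]
    exact (squarefree_iff_nodup_normalizedFactors hf.ne_zero).1 hsf
  refine ⟨(normalizedFactors f).toList, fun g hg => hfactor hg, ?_, ?_⟩
  · refine hnodup.imp_of_mem fun {g h} hg hh hne => ?_
    obtain ⟨hg_monic, hg_irr⟩ := hfactor hg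
    obtain ⟨hh_monic, hh_irr⟩ := hfactor hh
    refine hg_irr.coprime_iff_not_dvd.2 fun hdvd => hne ?_
    exact eq_of_monic_of_associated hg_monic hh_monic (hg_irr.associated_of_dvd hh_irr hdvd)
  · rw [Multiset.prod_toList, ← one_mul (normalizedFactors f).prod, ← C_1, ← hf.leadingCoeff]
    exact leadingCoeff_mul_prod_normalizedFactors f

end Polynomial

theorem ZMod.isNilpotent_of_castHom_eq_zero {p s : ℕ} [NeZero p] (hs : s ≠ 0)
    {a : ZMod (p ^ s)} (ha : ZMod.castHom (dvd_pow_self p hs) (ZMod p) a = 0) : IsNilpotent a := by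
  have ha_val : a = (a.val : ZMod (p ^ s)) := (ZMod.natCast_zmod_val a).symm
  rw [ha_val, map_natCast, ZMod.natCast_eq_zero_iff] at ha
  refine ⟨s, ?_⟩
  rw [ha_val, ← Nat.cast_pow, ZMod.natCast_eq_zero_iff]
  exact pow_dvd_pow_of_dvd ha s

theorem isNilpotent_ker_dualRed (p s : ℕ) [NeZero p] (hs : 0 < s) :
    IsNilpotent (RingHom.ker (dualRed p s hs)) := by
  have : Finite (DualNumber (ZMod (p ^ s))) :=
    inferInstanceAs (Finite (ZMod (p ^ s) × ZMod (p ^ s)))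
  refine (Ideal.FG.isNilpotent_iff_le_nilradical (IsNoetherian.noetherian _)).2 fun x hx => ?_
  rw [mem_nilradical, TrivSqZeroExt.isNilpotent_iff_isNilpotent_fst]
  exact ZMod.isNilpotent_of_castHom_eq_zero hs.ne' hx

theorem xn_sub_one_factors_basic_irreducible (p s n : ℕ) [Fact p.Prime] (hs : 0 < s)
    (hn : 0 < n) (hcop : Nat.gcd n p = 1) :
    ∃ (t : ℕ), 0 < t ∧ ∃ f : Fin t → Polynomial (DualNumber (ZMod (p ^ s))),
      (∀ l, (f l).Monic) ∧
      (∀ l, Irreducible ((f l).map (dualRed p s hs))) ∧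
      (∀ l l', l ≠ l' → ∃ a b : Polynomial (DualNumber (ZMod (p ^ s))),
        a * f l + b * f l' = 1) ∧
      (X ^ n - 1 : Polynomial (DualNumber (ZMod (p ^ s)))) = ∏ l, f l := by
  have hsurj : Function.Surjective (dualRed p s hs) := ZMod.ringHom_surjective _
  have hnil := isNilpotent_ker_dualRed p s hs
  have hn_ne : (n : ZMod p) ≠ 0 := by
    rw [Ne, ZMod.natCast_eq_zero_iff]
    exact (Nat.Prime.coprime_iff_not_dvd Fact.out).1 (Nat.Coprime.symm hcop)
  have hsf : Squarefree (X ^ n - 1 : (ZMod p)[X]) := by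
    simpa using (separable_X_pow_sub_C (1 : ZMod p) hn_ne one_ne_zero).squarefree
  have hmonic (R : Type) [CommRing R] : (X ^ n - 1 : R[X]).Monic := by
    simpa using monic_X_pow_sub_C (1 : R) hn.ne'
  obtain ⟨L, hL, hLco, hLprod⟩ := exists_list_monic_irreducible_of_squarefree (hmonic _) hsf
  obtain ⟨M, hM, hML, hMprod⟩ :=
    exists_monic_list_lift hsurj hnil (fun g hg => (hL g hg).1) hLco (hmonic _) (by simp [hLprod])
  have hMco : M.Pairwise IsCoprime := by
    rw [← hML, List.pairwise_map] at hLco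
    exact hLco.imp (isCoprime_of_isCoprime_map hsurj (Ideal.le_nilradical_of_isNilpotent hnil))
  refine ⟨M.length, ?_, fun l => M[l], fun l => hM _ (List.getElem_mem _),
    fun l => (hL _ (hML ▸ List.mem_map_of_mem (List.getElem_mem _))).2, fun l l' hne => ?_, ?_⟩
  · refine List.length_pos_iff.2 fun hM0 => ?_
    subst hM0
    rw [← hML, List.map_nil, List.prod_nil] at hLprod
    have hdeg := natDegree_X_pow_sub_C (n := n) (r := (1 : ZMod p))
    rw [C_1, ← hLprod, natDegree_one] at hdeg
    omega
  · rcases Nat.lt_or_gt_of_ne (Fin.val_ne_of_ne hne) with h | h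
    · exact List.pairwise_iff_getElem.1 hMco _ _ _ _ h
    · exact (List.pairwise_iff_getElem.1 hMco _ _ _ _ h).symm
  · exact hMprod.trans (Fin.prod_univ_getElem M).symm
end

section
/- Let p be a prime, s a positive integer, q = p^s, R = Z_q[u]/(u^2), and let f ∈ R[X] be a basic irreducible polynomial of degree m. Set S = R[X]/(f). Then the group of units S^× has cardinality (p^m − 1)·p^{(2s−1)m}; moreover there exist subgroups G_C and G_A of S^× such that G_C is cyclic of order p^m − 1, G_A has cardinality p^{(2s−1)m}, G_C ∩ G_A = {1}, and every unit of S is a product of an element of G_C and an element of G_A. -/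
open Polynomial

section Aux

variable (p s : ℕ) [Fact p.Prime] (hs : 0 < s)

lemma dualRed_surjective : Function.Surjective (dualRed p s hs) := by
  haveI : NeZero (p ^ s) := ⟨pow_ne_zero s (Fact.out : p.Prime).pos.ne'⟩
  intro x
  refine ⟨TrivSqZeroExt.inl ((x.val : ℕ) : ZMod (p ^ s)), ?_⟩
  simp only [dualRed, RingHom.comp_apply, AlgHom.toRingHom_eq_coe, RingHom.coe_coe, TrivSqZeroExt.fstHom_apply, TrivSqZeroExt.fst_inl, map_natCast]
  exact ZMod.natCast_zmod_val x

/-- decomposition of elements of the kernel of `dualRed` -/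
lemma dualRed_ker_decomp (c : DualNumber (ZMod (p ^ s))) (hc : dualRed p s hs c = 0) :
    ∃ a b : DualNumber (ZMod (p ^ s)),
      c = (p : DualNumber (ZMod (p ^ s))) * a + DualNumber.eps * b := by
  haveI : NeZero (p ^ s) := ⟨pow_ne_zero s (Fact.out : p.Prime).pos.ne'⟩
  have h1 : ((c.fst.val : ℕ) : ZMod p) = 0 := by
    have : ZMod.castHom (dvd_pow_self p hs.ne') (ZMod p) c.fst = 0 := hc
    rw [ZMod.castHom_apply] at this
    rw [ZMod.natCast_val]
    exact this
  obtain ⟨n, hn⟩ := (ZMod.natCast_eq_zero_iff _ _).mp h1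
  refine ⟨TrivSqZeroExt.inl ((n : ℕ) : ZMod (p ^ s)), TrivSqZeroExt.inl c.snd, ?_⟩
  have hfst : c.fst = (p : ZMod (p ^ s)) * ((n : ℕ) : ZMod (p ^ s)) := by
    rw [← Nat.cast_mul, ← hn, ZMod.natCast_zmod_val]
  calc c = TrivSqZeroExt.inl c.fst + TrivSqZeroExt.inr c.snd :=
        (TrivSqZeroExt.inl_fst_add_inr_snd_eq c).symm
    _ = (p : DualNumber (ZMod (p ^ s))) * TrivSqZeroExt.inl ((n : ℕ) : ZMod (p ^ s))
        + DualNumber.eps * TrivSqZeroExt.inl c.snd := by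
        rw [hfst, ← TrivSqZeroExt.inl_natCast, TrivSqZeroExt.inl_mul_inl]
        congr 1
        rw [mul_comm, TrivSqZeroExt.inl_mul_eq_smul, ← DualNumber.inr_eq_smul_eps]

variable (f : Polynomial (DualNumber (ZMod (p ^ s))))

/-- The induced map `R[X]/(f) → F_p[X]/(f̄)`. -/
noncomputable def piHom : AdjoinRoot f →+* AdjoinRoot (f.map (dualRed p s hs)) :=
  AdjoinRoot.lift ((AdjoinRoot.of _).comp (dualRed p s hs)) (AdjoinRoot.root _)
    (by rw [← Polynomial.eval₂_map]; exact AdjoinRoot.eval₂_root _)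

lemma piHom_mk (g : Polynomial (DualNumber (ZMod (p ^ s)))) :
    piHom p s hs f (AdjoinRoot.mk f g) = AdjoinRoot.mk _ (g.map (dualRed p s hs)) := by
  rw [piHom, AdjoinRoot.lift_mk, ← Polynomial.eval₂_map, ← AdjoinRoot.aeval_eq,
    Polynomial.aeval_def, AdjoinRoot.algebraMap_eq]

lemma piHom_surjective : Function.Surjective (piHom p s hs f) := by
  intro y
  obtain ⟨g, rfl⟩ := AdjoinRoot.mk_surjective y
  obtain ⟨g', rfl⟩ := Polynomial.map_surjective _ (dualRed_surjective p s hs) g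
  exact ⟨AdjoinRoot.mk f g', piHom_mk p s hs f g'⟩

lemma piHom_ker_decomp (x : AdjoinRoot f) (hx : piHom p s hs f x = 0) :
    ∃ A B : AdjoinRoot f, x = (p : AdjoinRoot f) * A
      + (AdjoinRoot.of f DualNumber.eps) * B := by
  obtain ⟨g, rfl⟩ := AdjoinRoot.mk_surjective x
  rw [piHom_mk, AdjoinRoot.mk_eq_zero] at hx
  obtain ⟨hbar, hh⟩ := hx
  obtain ⟨h, rfl⟩ := Polynomial.map_surjective _ (dualRed_surjective p s hs) hbar
  set r := g - f * h with hr
  have hmkr : AdjoinRoot.mk f g = AdjoinRoot.mk f r := by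
    rw [hr, map_sub, map_mul, AdjoinRoot.mk_self, zero_mul, sub_zero]
  have hrmap : r.map (dualRed p s hs) = 0 := by
    rw [hr, Polynomial.map_sub, Polynomial.map_mul, hh]; ring
  have hcoeff : ∀ i, dualRed p s hs (r.coeff i) = 0 := by
    intro i
    have := congrArg (fun q => Polynomial.coeff q i) hrmap
    simpa [Polynomial.coeff_map] using this
  have hmem : AdjoinRoot.mk f r ∈
      Ideal.span {(p : AdjoinRoot f), AdjoinRoot.of f DualNumber.eps} := by
    have hsum : AdjoinRoot.mk f r =
        ∑ i ∈ r.support, AdjoinRoot.mk f (C (r.coeff i) * X ^ i) := by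
      rw [← map_sum]
      congr 1
      exact r.as_sum_support_C_mul_X_pow
    rw [hsum]
    apply Ideal.sum_mem
    intro i _
    obtain ⟨a, b, hab⟩ := dualRed_ker_decomp p s hs _ (hcoeff i)
    rw [map_mul, AdjoinRoot.mk_C, hab, map_add, map_mul, map_mul, map_natCast]
    apply Ideal.mul_mem_right
    exact Ideal.add_mem _
      (Ideal.mul_mem_right _ _ (Ideal.subset_span (by simp)))
      (Ideal.mul_mem_right _ _ (Ideal.subset_span (by simp)))
  rw [hmkr]
  rw [Ideal.mem_span_pair] at hmem
  obtain ⟨a, b, hab⟩ := hmem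
  exact ⟨a, b, by rw [← hab]; ring⟩

lemma piHom_ker_nilpotent (x : AdjoinRoot f) (hx : piHom p s hs f x = 0) :
    x ^ (2 * s) = 0 := by
  haveI : NeZero (p ^ s) := ⟨pow_ne_zero s (Fact.out : p.Prime).pos.ne'⟩
  obtain ⟨A, B, rfl⟩ := piHom_ker_decomp p s hs f x hx
  have hP : (p : AdjoinRoot f) ^ s = 0 := by
    have h1 : ((p ^ s : ℕ) : AdjoinRoot f) = 0 := by
      rw [← map_natCast (AdjoinRoot.of f), ← TrivSqZeroExt.inl_natCast,
        ZMod.natCast_self, TrivSqZeroExt.inl_zero, map_zero]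
    rw [← h1]; push_cast; ring
  have hE : (AdjoinRoot.of f DualNumber.eps) ^ 2 = 0 := by
    rw [sq, ← map_mul, DualNumber.eps_mul_eps, map_zero]
  rw [add_pow]
  apply Finset.sum_eq_zero
  intro i hi
  rcases le_or_gt s i with h | h
  · have : ((p : AdjoinRoot f) * A) ^ i = 0 := by
      rw [mul_pow, show i = s + (i - s) by omega, pow_add, hP, zero_mul, zero_mul]
    rw [this, zero_mul, zero_mul]
  · have : ((AdjoinRoot.of f DualNumber.eps) * B) ^ (2 * s - i) = 0 := by
      rw [mul_pow, show 2 * s - i = 2 + (2 * s - i - 2) by omega, pow_add, hE,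
        zero_mul, zero_mul]
    rw [this, mul_zero, zero_mul]

lemma piHom_isUnit (x : AdjoinRoot f) (hx : IsUnit (piHom p s hs f x)) : IsUnit x := by
  obtain ⟨y, hy⟩ := piHom_surjective p s hs f (↑hx.unit⁻¹)
  have h1 : piHom p s hs f (x * y) = 1 := by
    rw [map_mul, hy]
    exact hx.mul_val_inv
  have h2 : piHom p s hs f (x * y - 1) = 0 := by rw [map_sub, h1, map_one, sub_self]
  have h3 : IsUnit (x * y) := by
    have hn : IsNilpotent (x * y - 1) := ⟨2 * s, piHom_ker_nilpotent p s hs f _ h2⟩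
    simpa using hn.isUnit_one_add
  exact isUnit_of_mul_isUnit_left h3

end Aux

set_option maxHeartbeats 1000000 in
/-- The unit group of `S = R[X]/(f)`, `f` basic irreducible of degree `m`, has
cardinality `(p^m - 1) · p^{(2s-1)m}` and decomposes as `G_C × G_A`. -/
theorem units_of_galois_extension (p s : ℕ) [Fact p.Prime] (hs : 0 < s)
    (f : Polynomial (DualNumber (ZMod (p ^ s)))) (m : ℕ) (hm : f.natDegree = m)
    (hfm : f.Monic) (hfi : Irreducible (f.map (dualRed p s hs))) :
    Nat.card (AdjoinRoot f)ˣ = (p ^ m - 1) * p ^ ((2 * s - 1) * m) ∧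
    ∃ G_C G_A : Subgroup (AdjoinRoot f)ˣ,
      IsCyclic G_C ∧ Nat.card G_C = p ^ m - 1 ∧
      Nat.card G_A = p ^ ((2 * s - 1) * m) ∧
      G_C ⊓ G_A = ⊥ ∧
      ∀ x : (AdjoinRoot f)ˣ, ∃ c ∈ G_C, ∃ a ∈ G_A, x = c * a := by
  have hp : p.Prime := Fact.out
  haveI : NeZero (p ^ s) := ⟨pow_ne_zero s hp.pos.ne'⟩
  haveI : Fact (Irreducible (f.map (dualRed p s hs))) := ⟨hfi⟩
  set π := piHom p s hs f with hπdef
  -- degree facts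
  have hm1 : 0 < m := by
    rcases Nat.eq_zero_or_pos m with h0 | h; swap; · exact h
    exfalso
    have : f = 1 := hfm.natDegree_eq_zero.mp (hm.trans h0)
    rw [this, Polynomial.map_one] at hfi
    exact hfi.not_isUnit isUnit_one
  have hfbm : (f.map (dualRed p s hs)).Monic := hfm.map _
  have hm' : (f.map (dualRed p s hs)).natDegree = m := by
    rw [hfm.natDegree_map, hm]
  -- cardinalities
  have hk_card : Nat.card (AdjoinRoot (f.map (dualRed p s hs))) = p ^ m := by
    let pb := AdjoinRoot.powerBasis' hfbm
    rw [Nat.card_congr pb.basis.equivFun.toEquiv, Nat.card_fun, Nat.card_zmod,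
      Nat.card_eq_fintype_card, Fintype.card_fin]
    congr 1
  have hR_card : Nat.card (DualNumber (ZMod (p ^ s))) = p ^ (2 * s) := by
    have h0 : Nat.card (DualNumber (ZMod (p ^ s)))
        = Nat.card (ZMod (p ^ s) × ZMod (p ^ s)) := rfl
    rw [h0, Nat.card_prod, Nat.card_zmod, ← pow_add, two_mul]
  have hS_card : Nat.card (AdjoinRoot f) = p ^ (2 * s * m) := by
    let pb := AdjoinRoot.powerBasis' hfm
    rw [Nat.card_congr pb.basis.equivFun.toEquiv, Nat.card_fun, hR_card,
      Nat.card_eq_fintype_card, Fintype.card_fin, ← pow_mul]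
    congr 1
    rw [show pb.dim = f.natDegree from rfl, hm]
  haveI hSfin : Finite (AdjoinRoot f) := Nat.finite_of_card_ne_zero
    (by rw [hS_card]; exact (pow_pos hp.pos _).ne')
  haveI hkfin : Finite (AdjoinRoot (f.map (dualRed p s hs))) := Nat.finite_of_card_ne_zero
    (by rw [hk_card]; exact (pow_pos hp.pos _).ne')
  have hexp : (2 * s - 1) * m + m = 2 * s * m := by
    have hle : m ≤ 2 * s * m := Nat.le_mul_of_pos_left m (by omega)
    rw [Nat.sub_mul, one_mul]
    exact Nat.sub_add_cancel hle
  -- kernel of π cardinality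
  have hker_card : Nat.card (RingHom.ker π) = p ^ ((2 * s - 1) * m) := by
    have h1 := Submodule.card_eq_card_quotient_mul_card (RingHom.ker π)
    have h2 : Nat.card (AdjoinRoot f ⧸ RingHom.ker π)
        = Nat.card (AdjoinRoot (f.map (dualRed p s hs))) :=
      Nat.card_congr (RingHom.quotientKerEquivOfSurjective
        (piHom_surjective p s hs f)).toEquiv
    rw [hS_card, h2, hk_card] at h1
    have h3 : p ^ (2 * s * m) = p ^ ((2 * s - 1) * m) * p ^ m := by
      rw [← pow_add, hexp]
    rw [h3] at h1
    exact (Nat.eq_of_mul_eq_mul_right (pow_pos hp.pos m) h1.symm)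
  -- the unit map
  set ψ := Units.map (π : AdjoinRoot f →* AdjoinRoot (f.map (dualRed p s hs))) with hψdef
  have hψval : ∀ u : (AdjoinRoot f)ˣ, (ψ u : AdjoinRoot (f.map (dualRed p s hs))) = π u :=
    fun u => rfl
  have hψsurj : Function.Surjective ψ := by
    intro y
    obtain ⟨x, hx⟩ := piHom_surjective p s hs f (y : AdjoinRoot (f.map (dualRed p s hs)))
    have hu : IsUnit x := piHom_isUnit p s hs f x (by rw [hx]; exact y.isUnit)
    refine ⟨hu.unit, Units.ext ?_⟩
    rw [hψval, hu.unit_spec, hx]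
  -- kernel of ψ has the same cardinality as kernel of π
  have hkerψ_card : Nat.card ψ.ker = p ^ ((2 * s - 1) * m) := by
    rw [← hker_card]
    refine Nat.card_congr (Equiv.ofBijective
      (fun u => ⟨(u : (AdjoinRoot f)ˣ) - 1, ?_⟩) ⟨?_, ?_⟩)
    · have hu1 : π (u : (AdjoinRoot f)ˣ) = 1 := by
        rw [← hψval]
        exact congrArg Units.val u.2
      simp [RingHom.mem_ker, map_sub, hu1]
    · intro u v huv
      have : ((u : (AdjoinRoot f)ˣ) : AdjoinRoot f) = ((v : (AdjoinRoot f)ˣ) : AdjoinRoot f) := by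
        have := congrArg Subtype.val huv
        simpa [sub_left_inj] using this
      exact Subtype.ext (Units.ext this)
    · rintro ⟨x, hx⟩
      rw [RingHom.mem_ker] at hx
      have h1 : π (1 + x) = 1 := by rw [map_add, hx, map_one, add_zero]
      have hu : IsUnit (1 + x) := piHom_isUnit p s hs f _ (by rw [h1]; exact isUnit_one)
      refine ⟨⟨hu.unit, Units.ext ?_⟩, ?_⟩
      · rw [hψval, hu.unit_spec, h1, Units.val_one]
      · ext
        simp [hu.unit_spec]
  -- cardinality of units of k
  have hkunits : Nat.card (AdjoinRoot (f.map (dualRed p s hs)))ˣ = p ^ m - 1 := by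
    rw [Nat.card_units, hk_card]
  -- cardinality of units of S
  have hSU : Nat.card (AdjoinRoot f)ˣ = (p ^ m - 1) * p ^ ((2 * s - 1) * m) := by
    rw [Subgroup.card_eq_card_quotient_mul_card_subgroup ψ.ker, hkerψ_card]
    congr 1
    rw [← hkunits]
    exact Nat.card_congr (QuotientGroup.quotientKerEquivOfSurjective ψ hψsurj).toEquiv
  refine ⟨hSU, ?_⟩
  -- the group-theoretic decomposition
  set a := p ^ m - 1 with hadef
  set b := p ^ ((2 * s - 1) * m) with hbdef
  have hpm1 : 1 < p ^ m := Nat.one_lt_pow hm1.ne' hp.two_le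
  have ha_pos : 0 < a := by omega
  have hcop : Nat.Coprime a b := by
    apply Nat.Coprime.pow_right
    rw [Nat.coprime_comm]
    refine hp.coprime_iff_not_dvd.mpr fun hd => ?_
    have hdpm : p ∣ p ^ m := dvd_pow_self p hm1.ne'
    have : p ∣ 1 := by
      have := Nat.dvd_sub hdpm hd
      rwa [show p ^ m - a = 1 by omega] at this
    have h2 := Nat.le_of_dvd one_pos this
    have h3 := hp.two_le
    omega
  have hkpow : ∀ y : (AdjoinRoot (f.map (dualRed p s hs)))ˣ, y ^ a = 1 := by
    intro y
    rw [← hkunits]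
    exact pow_card_eq_one'
  have hSpow : ∀ x : (AdjoinRoot f)ˣ, x ^ (a * b) = 1 := by
    intro x
    rw [← hSU]
    exact pow_card_eq_one'
  set t := Nat.totient a with htdef
  have ht_pos : 0 < t := Nat.totient_pos.mpr ha_pos
  have hmod : b ^ t ≡ 1 [MOD a] := Nat.ModEq.pow_totient hcop.symm
  have hkey : ∀ (G : Type) (_ : Group G), ∀ g : G, g ^ a = 1 → g ^ b ^ t = g := by
    intro G _ g hg
    have hd : orderOf g ∣ a := orderOf_dvd_of_pow_eq_one hg
    have h1 : b ^ t ≡ 1 [MOD orderOf g] := hmod.of_dvd hd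
    calc g ^ b ^ t = g ^ 1 := pow_eq_pow_iff_modEq.mpr h1
      _ = g := pow_one g
  have hpowa : ∀ z : (AdjoinRoot f)ˣ, (z ^ b ^ t) ^ a = 1 := by
    intro z
    obtain ⟨t', ht'⟩ : ∃ t', t = t' + 1 := ⟨t - 1, by omega⟩
    calc (z ^ b ^ t) ^ a = z ^ (b ^ t * a) := by rw [← pow_mul]
      _ = z ^ ((a * b) * b ^ t') := by rw [ht', pow_succ]; ring_nf
      _ = (z ^ (a * b)) ^ b ^ t' := by rw [pow_mul]
      _ = 1 := by rw [hSpow, one_pow]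
  set G_C : Subgroup (AdjoinRoot f)ˣ := (powMonoidHom a :
    (AdjoinRoot f)ˣ →* (AdjoinRoot f)ˣ).ker with hGCdef
  have hGC_mem : ∀ x : (AdjoinRoot f)ˣ, x ∈ G_C ↔ x ^ a = 1 := by
    intro x
    rw [hGCdef, MonoidHom.mem_ker, powMonoidHom_apply]
  have hGA_pow : ∀ x ∈ ψ.ker, x ^ b = 1 := by
    intro x hx
    have h1 : (⟨x, hx⟩ : ψ.ker) ^ b = 1 := by
      rw [← hkerψ_card]
      exact pow_card_eq_one'
    have h2 := congrArg (Subtype.val) h1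
    simpa using h2
  have htriv : ∀ x : (AdjoinRoot f)ˣ, x ^ a = 1 → ψ x = 1 → x = 1 := by
    intro x h1 h2
    have hb : x ^ b = 1 := hGA_pow x (MonoidHom.mem_ker.mpr h2)
    have hd : orderOf x ∣ Nat.gcd a b :=
      Nat.dvd_gcd (orderOf_dvd_of_pow_eq_one h1) (orderOf_dvd_of_pow_eq_one hb)
    rw [hcop] at hd
    exact orderOf_eq_one_iff.mp (Nat.eq_one_of_dvd_one hd)
  set χ : G_C →* (AdjoinRoot (f.map (dualRed p s hs)))ˣ := ψ.comp G_C.subtype with hχdef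
  have hχapp : ∀ g : G_C, χ g = ψ (g : (AdjoinRoot f)ˣ) := fun g => rfl
  have hχinj : Function.Injective χ := by
    refine (injective_iff_map_eq_one χ).mpr fun g hg => ?_
    exact Subtype.ext (htriv _ ((hGC_mem _).mp g.2) ((hχapp g) ▸ hg))
  have hχsurj : Function.Surjective χ := by
    intro y
    obtain ⟨z, hz⟩ := hψsurj y
    refine ⟨⟨z ^ b ^ t, (hGC_mem _).mpr (hpowa z)⟩, ?_⟩
    rw [hχapp]
    show ψ (z ^ b ^ t) = y
    rw [map_pow, hz]
    exact hkey _ inferInstance y (hkpow y)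
  set e := MulEquiv.ofBijective χ ⟨hχinj, hχsurj⟩ with hedef
  refine ⟨G_C, ψ.ker, ?_, ?_, hkerψ_card, ?_, ?_⟩
  · exact isCyclic_of_surjective e.symm e.symm.surjective
  · exact (Nat.card_congr e.toEquiv).trans hkunits
  · rw [eq_bot_iff]
    intro x hx
    rw [Subgroup.mem_inf] at hx
    rw [Subgroup.mem_bot]
    exact htriv x ((hGC_mem x).mp hx.1) (MonoidHom.mem_ker.mp hx.2)
  · intro x
    refine ⟨x ^ b ^ t, (hGC_mem _).mpr (hpowa x), (x ^ b ^ t)⁻¹ * x, ?_, ?_⟩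
    · rw [MonoidHom.mem_ker, map_mul, map_inv, map_pow]
      have h1 : (ψ x) ^ b ^ t = ψ x := hkey _ inferInstance (ψ x) (hkpow (ψ x))
      rw [h1, inv_mul_cancel]
    · exact (mul_inv_cancel_left _ _).symm
end
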